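/- Let A be a finite category, k^• a weighting on A, and k_• a coweighting on A. Then ∑_a k^a = ∑_a k_a, where both sums are over all objects a of A. -/

import Mathlib

open CategoryTheory Matrix

def CategoryTheory.zetaMatrix (A : Type*) [Category A] [∀ a b : A, Fintype (a ⟶ b)] :
    Matrix A A ℚ :=
  Matrix.of fun a b => (Fintype.card (a ⟶ b) : ℚ)

theorem Matrix.sum_eq_sum_of_mulVec_eq_one_of_vecMul_eq_one {m n R : Type*} [Fintype m]
    [Fintype n] [Semiring R] (M : Matrix m n R) {w : n → R} {v : m → R}
    (hw : M *ᵥ w = 1) (hv : v ᵥ* M = 1) : ∑ j, w j = ∑ i, v i :=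
  calc ∑ j, w j = (v ᵥ* M) ⬝ᵥ w := by simp [hv, dotProduct]
    _ = v ⬝ᵥ (M *ᵥ w) := (Matrix.dotProduct_mulVec v M w).symm
    _ = ∑ i, v i := by simp [hw, dotProduct]

/-- **Lemma 2.1** (Leinster). For a finite category, the total weight of any
weighting equals the total coweight of any coweighting. -/
theorem stmt_8 {A : Type u} [Category.{v} A] [Fintype A]
    [∀ a b : A, Fintype (a ⟶ b)]
    (k : A → ℚ) (hk : ∀ a : A, ∑ b : A, (Fintype.card (a ⟶ b) : ℚ) * k b = 1)
    (k' : A → ℚ) (hk' : ∀ b : A, ∑ a : A, k' a * (Fintype.card (a ⟶ b) : ℚ) = 1) :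
    ∑ a : A, k a = ∑ a : A, k' a :=
  Matrix.sum_eq_sum_of_mulVec_eq_one_of_vecMul_eq_one (zetaMatrix A) (funext hk) (funext hk')
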